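/- Under the setup of independent h_t (mixture EGG with parameters α, β, a, b, c) and h_p (density μ² A₀^{−μ²} h^{μ²−1} on (0,A₀]), with constants h_a, P_t, η_r > 0 and ρ ∈ [0,1), the harvested power P_s = (1−ρ)η_r P_t·h_a h_t h_p has expectation E[P_s] = A₀ h_a (1−ρ) η_r P_t·(μ²/(1+μ²))·[αβ + (1−α) b Γ(a+1/c)/Γ(a)]. -/

import Mathlib

/-!
By independence, `E[h_t h_p] = E[h_t] E[h_p]`, so it suffices to compute the two means from
their densities. The mean of `h_p` is an elementary power integral over `(0, A₀]`. The mean of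
`h_t` splits along the mixture into an exponential and a generalized Gamma moment, both instances
of the Gamma-type integral `∫₀^∞ x ^ q exp (-(x / b) ^ p) dx = b ^ (q + 1) Γ((q + 1) / p) / p`.
-/

open MeasureTheory ProbabilityTheory Real Set

lemma integral_eq_integral_mul_of_map_eq_withDensity {Ω : Type*} [MeasurableSpace Ω]
    {P : Measure Ω} {X : Ω → ℝ} {f : ℝ → ℝ} (hX : AEMeasurable X P) (hf : Measurable f)
    (hf0 : ∀ x, 0 ≤ f x) (hmap : P.map X = volume.withDensity fun x => ENNReal.ofReal (f x)) :
    ∫ ω, X ω ∂P = ∫ x, f x * x := by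
  rw [← integral_map (f := fun x => x) hX aestronglyMeasurable_id, hmap,
    integral_withDensity_eq_integral_toReal_smul hf.ennreal_ofReal
      (ae_of_all _ fun _ => ENNReal.ofReal_lt_top)]
  simp only [ENNReal.toReal_ofReal (hf0 _), smul_eq_mul]

lemma exp_neg_div_rpow_eq {x b : ℝ} (p : ℝ) (hx : 0 ≤ x) (hb : 0 ≤ b) :
    exp (-(x / b) ^ p) = exp (-b ^ (-p) * x ^ p) := by
  rw [div_rpow hx hb, rpow_neg hb, div_eq_inv_mul, neg_mul]

lemma integrableOn_rpow_mul_exp_neg_div_rpow {p q b : ℝ} (hp : 0 < p) (hq : -1 < q)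
    (hb : 0 < b) : IntegrableOn (fun x : ℝ => x ^ q * exp (-(x / b) ^ p)) (Ioi 0) := by
  refine (integrableOn_rpow_mul_exp_neg_mul_rpow hq hp (rpow_pos_of_pos hb (-p))).congr_fun
    (fun x hx => ?_) measurableSet_Ioi
  rw [exp_neg_div_rpow_eq p (le_of_lt hx) hb.le]

lemma integral_Ioi_rpow_mul_exp_neg_div_rpow {p q b : ℝ} (hp : 0 < p) (hq : -1 < q)
    (hb : 0 < b) :
    ∫ x in Ioi 0, x ^ q * exp (-(x / b) ^ p) = b ^ (q + 1) / p * Gamma ((q + 1) / p) := by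
  rw [setIntegral_congr_fun measurableSet_Ioi
      (fun x hx => by rw [exp_neg_div_rpow_eq p (le_of_lt hx) hb.le]),
    integral_rpow_mul_exp_neg_mul_rpow hp hq (rpow_pos_of_pos hb (-p)), ← rpow_mul hb.le,
    show -p * (-(q + 1) / p) = q + 1 by field_simp]
  ring

/-- The exponential–generalized-Gamma (EGG) mixture density of the turbulence fading `h_t`. -/
noncomputable def mixtureEGGPDF (α β a b c x : ℝ) : ℝ :=
  if 0 < x then
    α / β * exp (-x / β) +
      (1 - α) * (c * x ^ (a * c - 1) / (b ^ (a * c) * Gamma a)) * exp (-(x / b) ^ c)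
  else 0

/-- The density of the pointing-error fading `h_p`. -/
noncomputable def pointingErrorPDF (μ A₀ h : ℝ) : ℝ :=
  if 0 < h ∧ h ≤ A₀ then μ ^ 2 / A₀ ^ (μ ^ 2) * h ^ (μ ^ 2 - 1) else 0

lemma measurable_mixtureEGGPDF (α β a b c : ℝ) : Measurable (mixtureEGGPDF α β a b c) :=
  Measurable.ite measurableSet_Ioi (by fun_prop) measurable_const

lemma mixtureEGGPDF_nonneg {α β a b c : ℝ} (hα0 : 0 ≤ α) (hα1 : α ≤ 1) (hβ : 0 ≤ β)
    (ha : 0 ≤ a) (hb : 0 ≤ b) (hc : 0 ≤ c) (x : ℝ) : 0 ≤ mixtureEGGPDF α β a b c x := by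
  unfold mixtureEGGPDF
  split_ifs with hx
  · have hΓ := Gamma_nonneg_of_nonneg ha
    have hbac := rpow_nonneg hb (a * c)
    have hxac := rpow_nonneg hx.le (a * c - 1)
    have h1α : 0 ≤ 1 - α := by linarith
    positivity
  · exact le_rfl

lemma integral_mixtureEGGPDF_mul_id {α β a b c : ℝ} (hβ : 0 < β) (ha : 0 < a) (hb : 0 < b)
    (hc : 0 < c) :
    ∫ x, mixtureEGGPDF α β a b c x * x =
      α * β + (1 - α) * b * Gamma (a + 1 / c) / Gamma a := by
  have hΓ : Gamma a ≠ 0 := (Gamma_pos_of_pos ha).ne'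
  have hbac : b ^ (a * c) ≠ 0 := (rpow_pos_of_pos hb _).ne'
  have hac : -1 < a * c := by nlinarith
  have hsplit : (fun x => mixtureEGGPDF α β a b c x * x) = (Ioi 0).indicator fun x =>
      α / β * (x ^ (1 : ℝ) * exp (-(x / β) ^ (1 : ℝ))) +
        (1 - α) * c / (b ^ (a * c) * Gamma a) * (x ^ (a * c) * exp (-(x / b) ^ c)) := by
    funext x
    by_cases hx : 0 < x
    · have hxac : x ^ (a * c) = x ^ (a * c - 1) * x := by
        rw [← rpow_add_one hx.ne', sub_add_cancel]
      simp only [mixtureEGGPDF, if_pos hx, indicator_of_mem (mem_Ioi.mpr hx), rpow_one,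
        neg_div, hxac]
      ring
    · simp [mixtureEGGPDF, hx]
  rw [hsplit, integral_indicator measurableSet_Ioi,
    integral_add
      ((integrableOn_rpow_mul_exp_neg_div_rpow one_pos (by norm_num) hβ).const_mul _)
      ((integrableOn_rpow_mul_exp_neg_div_rpow hc hac hb).const_mul _),
    integral_const_mul, integral_const_mul,
    integral_Ioi_rpow_mul_exp_neg_div_rpow one_pos (by norm_num) hβ,
    integral_Ioi_rpow_mul_exp_neg_div_rpow hc hac hb,
    show ((1 : ℝ) + 1) / 1 = 2 by norm_num, Gamma_two, rpow_add_one hβ.ne', rpow_one,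
    show (a * c + 1) / c = a + 1 / c by field_simp, rpow_add_one hb.ne']
  field_simp

lemma measurable_pointingErrorPDF (μ A₀ : ℝ) : Measurable (pointingErrorPDF μ A₀) :=
  Measurable.ite (measurableSet_Ioi.inter measurableSet_Iic) (by fun_prop) measurable_const

lemma pointingErrorPDF_nonneg {A₀ : ℝ} (μ : ℝ) (hA : 0 ≤ A₀) (h : ℝ) :
    0 ≤ pointingErrorPDF μ A₀ h := by
  unfold pointingErrorPDF
  split_ifs with hh
  · have := rpow_nonneg hA (μ ^ 2)
    have := rpow_nonneg hh.1.le (μ ^ 2 - 1)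
    positivity
  · exact le_rfl

lemma integral_pointingErrorPDF_mul_id {A₀ : ℝ} (μ : ℝ) (hA : 0 < A₀) :
    ∫ h, pointingErrorPDF μ A₀ h * h = A₀ * (μ ^ 2 / (1 + μ ^ 2)) := by
  have hA₀μ : A₀ ^ (μ ^ 2) ≠ 0 := (rpow_pos_of_pos hA _).ne'
  have hrestrict : (fun h => pointingErrorPDF μ A₀ h * h) =
      (Ioc 0 A₀).indicator fun h => μ ^ 2 / A₀ ^ (μ ^ 2) * h ^ (μ ^ 2) := by
    funext h
    by_cases hh : 0 < h ∧ h ≤ A₀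
    · simp only [pointingErrorPDF, if_pos hh, indicator_of_mem (show h ∈ Ioc 0 A₀ from hh),
        mul_assoc, ← rpow_add_one hh.1.ne', sub_add_cancel]
    · simp [pointingErrorPDF, hh]
  rw [hrestrict, integral_indicator measurableSet_Ioc, integral_const_mul,
    ← intervalIntegral.integral_of_le hA.le,
    integral_rpow (Or.inl (by nlinarith [sq_nonneg μ])),
    zero_rpow (by positivity), rpow_add_one hA.ne']
  field_simp
  ring

theorem stmt_10_general {Ω : Type*} [MeasureSpace Ω]
    (ht hp : Ω → ℝ) (htm : Measurable ht) (hpm : Measurable hp)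
    (α β a b c μ A₀ ha ηr Pt ρ : ℝ) (hα0 : 0 ≤ α) (hα1 : α ≤ 1)
    (hβ : 0 < β) (ha' : 0 < a) (hb : 0 < b) (hc : 0 < c)
    (hA : 0 < A₀)
    (hindep : IndepFun ht hp ℙ)
    (hdt : Measure.map ht ℙ = volume.withDensity (fun x => ENNReal.ofReal
        (if 0 < x then
          α / β * Real.exp (-x / β) +
            (1 - α) * (c * x ^ (a * c - 1) / (b ^ (a * c) * Real.Gamma a)) *
              Real.exp (-(x / b) ^ c)
        else 0)))
    (hdp : Measure.map hp ℙ = volume.withDensity (fun h => ENNReal.ofReal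
        (if 0 < h ∧ h ≤ A₀ then μ ^ 2 / A₀ ^ (μ ^ 2) * h ^ (μ ^ 2 - 1) else 0))) :
    ∫ ω, (1 - ρ) * ηr * Pt * (ha * ht ω * hp ω) ∂(ℙ : Measure Ω) =
      A₀ * ha * (1 - ρ) * ηr * Pt * (μ ^ 2 / (1 + μ ^ 2)) *
        (α * β + (1 - α) * b * Real.Gamma (a + 1 / c) / Real.Gamma a) := by
  have hmean_t : ∫ ω, ht ω = α * β + (1 - α) * b * Gamma (a + 1 / c) / Gamma a :=
    (integral_eq_integral_mul_of_map_eq_withDensity htm.aemeasurable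
      (measurable_mixtureEGGPDF α β a b c)
      (mixtureEGGPDF_nonneg hα0 hα1 hβ.le ha'.le hb.le hc.le) hdt).trans
      (integral_mixtureEGGPDF_mul_id hβ ha' hb hc)
  have hmean_p : ∫ ω, hp ω = A₀ * (μ ^ 2 / (1 + μ ^ 2)) :=
    (integral_eq_integral_mul_of_map_eq_withDensity hpm.aemeasurable
      (measurable_pointingErrorPDF μ A₀) (pointingErrorPDF_nonneg μ hA.le) hdp).trans
      (integral_pointingErrorPDF_mul_id μ hA)
  have hmean_prod : ∫ ω, ht ω * hp ω = (∫ ω, ht ω) * ∫ ω, hp ω :=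
    hindep.integral_mul_eq_mul_integral htm.aestronglyMeasurable hpm.aestronglyMeasurable
  calc ∫ ω, (1 - ρ) * ηr * Pt * (ha * ht ω * hp ω)
      = (1 - ρ) * ηr * Pt * ha * ∫ ω, ht ω * hp ω := by
        rw [← integral_const_mul]
        simp only [mul_assoc]
    _ = A₀ * ha * (1 - ρ) * ηr * Pt * (μ ^ 2 / (1 + μ ^ 2)) *
        (α * β + (1 - α) * b * Gamma (a + 1 / c) / Gamma a) := by
        rw [hmean_prod, hmean_t, hmean_p]
        ring

/-- Average harvested power: E[P_s] with P_s = (1−ρ)η_r P_t·h_a h_t h_p equals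
A₀ h_a (1−ρ) η_r P_t·(μ²/(1+μ²))·[αβ + (1−α) b Γ(a+1/c)/Γ(a)]. -/
theorem stmt_10 {Ω : Type*} [MeasureSpace Ω] [IsProbabilityMeasure (ℙ : Measure Ω)]
    (ht hp : Ω → ℝ) (htm : Measurable ht) (hpm : Measurable hp)
    (α β a b c μ A₀ ha ηr Pt ρ : ℝ) (hα0 : 0 ≤ α) (hα1 : α ≤ 1)
    (hβ : 0 < β) (ha' : 0 < a) (hb : 0 < b) (hc : 0 < c)
    (hμ : 0 < μ) (hA : 0 < A₀) (hha : 0 < ha) (hηr : 0 < ηr) (hPt : 0 < Pt)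
    (hρ0 : 0 ≤ ρ) (hρ1 : ρ < 1)
    (hindep : IndepFun ht hp ℙ)
    (hdt : Measure.map ht ℙ = volume.withDensity (fun x => ENNReal.ofReal
        (if 0 < x then
          α / β * Real.exp (-x / β) +
            (1 - α) * (c * x ^ (a * c - 1) / (b ^ (a * c) * Real.Gamma a)) *
              Real.exp (-(x / b) ^ c)
        else 0)))
    (hdp : Measure.map hp ℙ = volume.withDensity (fun h => ENNReal.ofReal
        (if 0 < h ∧ h ≤ A₀ then μ ^ 2 / A₀ ^ (μ ^ 2) * h ^ (μ ^ 2 - 1) else 0))) :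
    ∫ ω, (1 - ρ) * ηr * Pt * (ha * ht ω * hp ω) ∂(ℙ : Measure Ω) =
      A₀ * ha * (1 - ρ) * ηr * Pt * (μ ^ 2 / (1 + μ ^ 2)) *
        (α * β + (1 - α) * b * Real.Gamma (a + 1 / c) / Real.Gamma a) :=
  stmt_10_general ht hp htm hpm α β a b c μ A₀ ha ηr Pt ρ hα0 hα1 hβ ha' hb hc hA hindep hdt hdp
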